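/- Let i ∈ V and let 𝒟_i = (An(i), E_i) be a subgraph of 𝒟 with node set An(i) and E_i ⊆ E ∩ (An(i)×An(i)) such that the underlying undirected graph of 𝒟_i (the simple graph on An(i) in which u and v are adjacent iff u ≠ v and (u,v) ∈ E_i or (v,u) ∈ E_i) has no cycles, and such that for every j ∈ an(i) the graph 𝒟_i contains a path from j to i that is max-weighted in 𝒟. Fix z ∈ [0,∞)^d, let x be the recursive max-linear values on 𝒟, and let y be the recursive max-linear values on 𝒟_i with the same weights (c restricted to edges of E_i and the same diagonal weights c_{jj}) and the same z. Then for every j ∈ An(i) whose set of ancestors in 𝒟_i equals its set of ancestors in 𝒟, one has x_j = y_j. -/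

import Mathlib

/-! On the whole DAG the recursive values have the max-linear representation
`x j = ⨆ₖ b k j * z k`, and by induction along the DAG the recursive values on any subgraph are
bounded by the same expression, so `y ≤ x`. Conversely, each term `b k j * z k` with `k ∈ an(j)`
is reached in `𝒟ᵢ`: `k` is also a `𝒟ᵢ`-ancestor of `j`, and since the skeleton of `𝒟ᵢ` is a
forest, the `𝒟ᵢ`-path from `k` to `j` is the unique one, hence a prefix of the max-weighted
`𝒟ᵢ`-path from `k` to `i`. A prefix of a max-weighted path is max-weighted (edge weights are
positive, so the common suffix cancels), so `b k j * z k ≤ y j`. -/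

open scoped NNReal ENNReal Classical

namespace MaxLinearDAG

variable {d : ℕ}

/-- `p` is a directed path (with at least one edge) from `j` to `i` in the edge relation `E`. -/
def PathFrom (E : Fin d → Fin d → Prop) (j i : Fin d) (p : List (Fin d)) : Prop :=
  2 ≤ p.length ∧ p.head? = some j ∧ p.getLast? = some i ∧ List.Chain' E p

/-- The directed graph given by `E` is acyclic: no directed path from a node to itself. -/
def Acyclic (E : Fin d → Fin d → Prop) : Prop :=
  ∀ i, ¬ ∃ p, PathFrom E i i p

/-- `j` is an ancestor of `i`: there is a path from `j` to `i`. -/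
def anc (E : Fin d → Fin d → Prop) (j i : Fin d) : Prop :=
  ∃ p, PathFrom E j i p

/-- The weight of a path `p` starting at `j`: `c j j` times the product of the
edge weights along `p`. -/
noncomputable def pathWeight (c : Fin d → Fin d → ℝ≥0) (j : Fin d) (p : List (Fin d)) : ℝ≥0 :=
  c j j * ((p.zip p.tail).map fun q => c q.1 q.2).prod

/-- `b` is the max-linear coefficient matrix of the recursive ML model on `(E, c)`:
for `j ∈ an(i)`, `b j i` is the (attained) maximum of the path weights over all paths
from `j` to `i`; `b i i = c i i`; and `b j i = 0` for `j ∉ An(i)`. -/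
def IsMLMatrix (E : Fin d → Fin d → Prop) (c b : Fin d → Fin d → ℝ≥0) : Prop :=
  (∀ i, b i i = c i i) ∧
  (∀ j i, j ≠ i → ¬ anc E j i → b j i = 0) ∧
  (∀ j i p, PathFrom E j i p → pathWeight c j p ≤ b j i) ∧
  (∀ j i, anc E j i → ∃ p, PathFrom E j i p ∧ pathWeight c j p = b j i)

/-- `x` is the vector of recursive max-linear values on `(E, c)` for noise `z`:
`x i = max (max_{k ∈ pa(i)} c k i * x k) (c i i * z i)`, empty max being `0`. -/
def IsRecML (E : Fin d → Fin d → Prop) (c : Fin d → Fin d → ℝ≥0) (z x : Fin d → ℝ≥0) : Prop :=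
  ∀ i, x i = (Finset.univ.sup fun k => if E k i then c k i * x k else 0) ⊔ c i i * z i

/-- Max-times matrix product `F ⊙ G`. -/
noncomputable def mprod (F G : Fin d → Fin d → ℝ≥0) : Fin d → Fin d → ℝ≥0 :=
  fun i j => Finset.univ.sup fun k => F i k * G k j

/-- Max-times matrix power, `mpow A 0` being the identity matrix. -/
noncomputable def mpow (A : Fin d → Fin d → ℝ≥0) : ℕ → Fin d → Fin d → ℝ≥0
  | 0 => fun i j => if i = j then 1 else 0
  | n + 1 => mprod (mpow A n) A

/-- `p` is a max-weighted path from `j` to `i`. -/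
def MaxWeighted (E : Fin d → Fin d → Prop) (c b : Fin d → Fin d → ℝ≥0)
    (j i : Fin d) (p : List (Fin d)) : Prop :=
  PathFrom E j i p ∧ pathWeight c j p = b j i

/-- The lowest max-weighted ancestors of `i` in `U`: nodes `j ∈ An(i) ∩ U` such that no
max-weighted path from `j` to `i` passes through a node of `U \ {j}`. -/
def AnLow (E : Fin d → Fin d → Prop) (c b : Fin d → Fin d → ℝ≥0)
    (U : Set (Fin d)) (i : Fin d) : Set (Fin d) :=
  {j | (anc E j i ∨ j = i) ∧ j ∈ U ∧
    ∀ p, MaxWeighted E c b j i p → ¬ ∃ u ∈ U \ {j}, u ∈ p}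

/-- The highest max-weighted descendants of `i` in `U`: nodes `l ∈ De(i) ∩ U` such that no
max-weighted path from `i` to `l` passes through a node of `U \ {l}`. -/
def DeHigh (E : Fin d → Fin d → Prop) (c b : Fin d → Fin d → ℝ≥0)
    (U : Set (Fin d)) (i : Fin d) : Set (Fin d) :=
  {l | (anc E i l ∨ l = i) ∧ l ∈ U ∧
    ∀ p, MaxWeighted E c b i l p → ¬ ∃ u ∈ U \ {l}, u ∈ p}

theorem _root_.SimpleGraph.IsAcyclic.eq_of_isChain {V : Type*} {G : SimpleGraph V}
    (hG : G.IsAcyclic) {l₁ l₂ : List V} (h₁ : l₁ ≠ []) (h₂ : l₂ ≠ [])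
    (hhead : l₁.head h₁ = l₂.head h₂) (hlast : l₁.getLast h₁ = l₂.getLast h₂)
    (hc₁ : l₁.IsChain G.Adj) (hc₂ : l₂.IsChain G.Adj) (hn₁ : l₁.Nodup) (hn₂ : l₂.Nodup) :
    l₁ = l₂ := by
  have := (hG.subsingleton_path _ _).elim
    ⟨.ofSupport l₁ h₁ hc₁, by rw [SimpleGraph.Walk.isPath_def]; simpa using hn₁⟩
    ⟨(SimpleGraph.Walk.ofSupport l₂ h₂ hc₂).copy hhead.symm hlast.symm,
      by rw [SimpleGraph.Walk.isPath_def]; simpa using hn₂⟩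
  simpa using congrArg (fun p => p.1.support) this

noncomputable def edgeWeight (c : Fin d → Fin d → ℝ≥0) (p : List (Fin d)) : ℝ≥0 :=
  ((p.zip p.tail).map fun q => c q.1 q.2).prod

@[simp]
lemma edgeWeight_pair (c : Fin d → Fin d → ℝ≥0) (k j : Fin d) : edgeWeight c [k, j] = c k j := by
  simp [edgeWeight]

inductive IsDPath (E : Fin d → Fin d → Prop) : Fin d → Fin d → List (Fin d) → Prop
  | edge {j i : Fin d} : E j i → IsDPath E j i [j, i]
  | cons {j k i : Fin d} {p : List (Fin d)} : E j k → IsDPath E k i p → IsDPath E j i (j :: p)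

section Paths

variable {E E' : Fin d → Fin d → Prop} {c : Fin d → Fin d → ℝ≥0} {j k i : Fin d}
  {p q : List (Fin d)}

lemma IsDPath.exists_eq_cons (h : IsDPath E j i p) : ∃ t, p = j :: t := by
  cases h <;> exact ⟨_, rfl⟩

lemma pathFrom_iff_isDPath : PathFrom E j i p ↔ IsDPath E j i p := by
  constructor
  · rintro ⟨hlen, hhead, hlast, hchain⟩
    induction p generalizing j with
    | nil => simp at hlen
    | cons a t ih =>
      obtain rfl : a = j := by simpa using hhead
      obtain _ | ⟨m, t⟩ := t
      · simp at hlen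
      replace hchain := List.isChain_cons_cons.mp hchain
      obtain _ | ⟨n, t⟩ := t
      · obtain rfl : m = i := by simpa using hlast
        exact .edge hchain.1
      · exact .cons hchain.1 (ih (by simp) rfl (by simpa using hlast) hchain.2)
  · intro h
    induction h with
    | edge h => exact ⟨by simp, rfl, rfl, List.isChain_pair.mpr h⟩
    | cons h hp ih =>
      obtain ⟨t, rfl⟩ := hp.exists_eq_cons
      obtain ⟨hlen, -, hlast, hchain⟩ := ih
      exact ⟨by simp, rfl, by simpa using hlast, List.isChain_cons_cons.mpr ⟨h, hchain⟩⟩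

lemma PathFrom.of_rel (h : E j i) : PathFrom E j i [j, i] :=
  pathFrom_iff_isDPath.mpr (.edge h)

lemma PathFrom.mono (hE : ∀ u v, E' u v → E u v) (h : PathFrom E' j i p) : PathFrom E j i p :=
  ⟨h.1, h.2.1, h.2.2.1, h.2.2.2.imp fun _ _ => hE _ _⟩

lemma PathFrom.append (hp : PathFrom E j k p) (hq : PathFrom E k i q) :
    PathFrom E j i (p ++ q.tail) := by
  rw [pathFrom_iff_isDPath] at *
  induction hp with
  | edge h => obtain ⟨t, rfl⟩ := hq.exists_eq_cons; exact .cons h hq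
  | cons h _ ih => exact .cons h (ih hq)

lemma anc_trans (h₁ : anc E j k) (h₂ : anc E k i) : anc E j i :=
  ⟨_, h₁.choose_spec.append h₂.choose_spec⟩

lemma PathFrom.edgeWeight_append (hp : PathFrom E j k p) (hq : PathFrom E k i q) :
    edgeWeight c (p ++ q.tail) = edgeWeight c p * edgeWeight c q := by
  rw [pathFrom_iff_isDPath] at hp hq
  obtain ⟨t, rfl⟩ := hq.exists_eq_cons
  induction hp with
  | edge h => simp [edgeWeight]
  | cons h hp ih =>
    obtain ⟨s, rfl⟩ := hp.exists_eq_cons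
    simp only [edgeWeight, List.cons_append, List.tail_cons, List.zip_cons_cons,
      List.map_cons, List.prod_cons] at ih ⊢
    rw [ih hq, mul_assoc]

lemma PathFrom.pathWeight_append (hp : PathFrom E j k p) (hq : PathFrom E k i q) :
    pathWeight c j (p ++ q.tail) = pathWeight c j p * edgeWeight c q := by
  rw [pathWeight, pathWeight, ← edgeWeight, ← edgeWeight, hp.edgeWeight_append hq, mul_assoc]

lemma PathFrom.edgeWeight_pos (hc : ∀ u v, E u v → 0 < c u v) (h : PathFrom E j i p) :
    0 < edgeWeight c p := by
  rw [pathFrom_iff_isDPath] at h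
  induction h with
  | edge h => simpa [edgeWeight] using hc _ _ h
  | cons h hp ih =>
    obtain ⟨t, rfl⟩ := hp.exists_eq_cons
    simpa [edgeWeight] using mul_pos (hc _ _ h) ih

lemma PathFrom.eq_or_anc_of_mem (h : PathFrom E j i p) {u : Fin d} (hu : u ∈ p) :
    u = j ∨ anc E j u := by
  rw [pathFrom_iff_isDPath] at h
  induction h with
  | edge h =>
    rcases List.mem_pair.mp hu with rfl | rfl
    exacts [Or.inl rfl, Or.inr ⟨_, PathFrom.of_rel h⟩]
  | cons h hp ih =>
    rcases List.mem_cons.mp hu with rfl | hu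
    · exact Or.inl rfl
    rcases ih hu with rfl | hanc
    exacts [Or.inr ⟨_, PathFrom.of_rel h⟩, Or.inr (anc_trans ⟨_, PathFrom.of_rel h⟩ hanc)]

lemma Acyclic.mono (hE : ∀ u v, E' u v → E u v) (h : Acyclic E) : Acyclic E' :=
  fun u ⟨p, hp⟩ => h u ⟨p, hp.mono hE⟩

lemma Acyclic.wellFounded_anc (hE : Acyclic E) : WellFounded (anc E) :=
  @Finite.wellFounded_of_trans_of_irrefl _ _ _ ⟨fun _ _ _ => anc_trans⟩ ⟨hE⟩

lemma PathFrom.nodup (hE : Acyclic E) (h : PathFrom E j i p) : p.Nodup := by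
  rw [pathFrom_iff_isDPath] at h
  induction h with
  | @edge j i h =>
    refine List.nodup_cons.mpr ⟨fun hji => hE j ?_, List.nodup_singleton i⟩
    obtain rfl : j = i := List.mem_singleton.mp hji
    exact ⟨_, PathFrom.of_rel h⟩
  | @cons j k i p h hp ih =>
    refine List.nodup_cons.mpr ⟨fun hj => ?_, ih⟩
    rcases (pathFrom_iff_isDPath.mpr hp).eq_or_anc_of_mem hj with rfl | hkj
    exacts [hE _ ⟨_, PathFrom.of_rel h⟩, hE _ (anc_trans ⟨_, PathFrom.of_rel h⟩ hkj)]

lemma PathFrom.eq_of_isAcyclic (hE : Acyclic E) (hforest : (SimpleGraph.fromRel E).IsAcyclic)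
    (hp : PathFrom E j i p) (hq : PathFrom E j i q) : p = q := by
  have hadj : ∀ u v, E u v → (SimpleGraph.fromRel E).Adj u v := fun u v h =>
    (SimpleGraph.fromRel_adj E u v).mpr
      ⟨by rintro rfl; exact hE u ⟨_, PathFrom.of_rel h⟩, Or.inl h⟩
  have hne : ∀ {l : List (Fin d)}, PathFrom E j i l → l ≠ [] := by
    rintro l ⟨hlen, -⟩ rfl
    simp at hlen
  have hchain : ∀ {l : List (Fin d)}, PathFrom E j i l → l.IsChain (SimpleGraph.fromRel E).Adj :=
    fun h => h.2.2.2.imp fun _ _ => hadj _ _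
  refine hforest.eq_of_isChain (hne hp) (hne hq) ?_ ?_ (hchain hp) (hchain hq)
    (hp.nodup hE) (hq.nodup hE)
  · rw [(List.head_eq_iff_head?_eq_some _).mpr hp.2.1, (List.head_eq_iff_head?_eq_some _).mpr hq.2.1]
  · rw [List.getLast_of_mem_getLast? hp.2.2.1, List.getLast_of_mem_getLast? hq.2.2.1]

end Paths

section MaxLinear

variable {E E' : Fin d → Fin d → Prop} {c b : Fin d → Fin d → ℝ≥0} {z x y : Fin d → ℝ≥0}
  {j k i : Fin d} {p q r : List (Fin d)}

lemma IsMLMatrix.mul_edgeWeight_le (hb : IsMLMatrix E c b) (hq : PathFrom E k i q) (j : Fin d) :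
    b j k * edgeWeight c q ≤ b j i := by
  by_cases hjk : j = k
  · subst hjk
    rw [hb.1]
    exact hb.2.2.1 j i q hq
  by_cases hanc : anc E j k
  · obtain ⟨p, hp, hpw⟩ := hb.2.2.2 j k hanc
    rw [← hpw, ← hp.pathWeight_append hq]
    exact hb.2.2.1 j i _ (hp.append hq)
  · simp [hb.2.1 j k hjk hanc]

lemma MaxWeighted.of_append (hb : IsMLMatrix E c b) (hc : ∀ u v, E u v → 0 < c u v)
    (hq : PathFrom E k j q) (hr : PathFrom E j i r) (h : MaxWeighted E c b k i (q ++ r.tail)) :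
    MaxWeighted E c b k j q := by
  refine ⟨hq, le_antisymm (hb.2.2.1 k j q hq) ?_⟩
  have : b k j * edgeWeight c r ≤ pathWeight c k q * edgeWeight c r := by
    rw [← hq.pathWeight_append hr, h.2]
    exact hb.mul_edgeWeight_le hr k
  exact le_of_mul_le_mul_right this (hr.edgeWeight_pos hc)

lemma IsRecML.mul_self_le (hx : IsRecML E c z x) (j : Fin d) : c j j * z j ≤ x j := by
  rw [hx j]
  exact le_sup_right

lemma IsRecML.mul_le_of_rel (hx : IsRecML E c z x) (h : E k j) : c k j * x k ≤ x j := by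
  rw [hx j]
  refine le_sup_of_le_left ?_
  simpa [h] using Finset.le_sup (f := fun u => if E u j then c u j * x u else 0)
    (Finset.mem_univ k)

lemma IsRecML.edgeWeight_mul_le (hx : IsRecML E c z x) (h : PathFrom E k j p) :
    edgeWeight c p * x k ≤ x j := by
  rw [pathFrom_iff_isDPath] at h
  induction h with
  | edge h => simpa using hx.mul_le_of_rel h
  | @cons k m j p h hp ih =>
    obtain ⟨t, rfl⟩ := hp.exists_eq_cons
    calc edgeWeight c (k :: m :: t) * x k = edgeWeight c (m :: t) * (c k m * x k) := by
          simp only [edgeWeight, List.tail_cons, List.zip_cons_cons, List.map_cons,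
            List.prod_cons]
          ring
      _ ≤ edgeWeight c (m :: t) * x m := mul_le_mul_right (hx.mul_le_of_rel h) _
      _ ≤ x j := ih

lemma IsRecML.pathWeight_mul_le (hx : IsRecML E c z x) (h : PathFrom E k j p) :
    pathWeight c k p * z k ≤ x j :=
  calc pathWeight c k p * z k = edgeWeight c p * (c k k * z k) := by
        rw [pathWeight, edgeWeight]
        ring
    _ ≤ edgeWeight c p * x k := mul_le_mul_right (hx.mul_self_le k) _
    _ ≤ x j := hx.edgeWeight_mul_le h

lemma IsRecML.le_sup_mlMatrix (hE : Acyclic E) (hb : IsMLMatrix E c b)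
    (hE' : ∀ u v, E' u v → E u v) (hy : IsRecML E' c z y) (j : Fin d) :
    y j ≤ Finset.univ.sup fun k => b k j * z k := by
  induction j using hE.wellFounded_anc.induction with
  | _ j ih =>
  rw [hy j]
  refine sup_le (Finset.sup_le fun k _ => ?_) ?_
  · split_ifs with hk
    · have hkj : E k j := hE' k j hk
      calc c k j * y k ≤ c k j * Finset.univ.sup fun u => b u k * z u :=
            mul_le_mul_right (ih k ⟨_, .of_rel hkj⟩) _
        _ = Finset.univ.sup fun u => c k j * (b u k * z u) := Finset.mul_sup₀ _ _ _
        _ ≤ Finset.univ.sup fun u => b u j * z u := Finset.sup_mono_fun fun u _ => by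
            rw [mul_left_comm, ← mul_assoc, ← edgeWeight_pair c k j]
            exact mul_le_mul_left (hb.mul_edgeWeight_le (.of_rel hkj) u) _
    · exact bot_le
  · rw [← hb.1 j]
    exact Finset.le_sup (f := fun k => b k j * z k) (Finset.mem_univ j)

lemma IsRecML.sup_mlMatrix_le (hb : IsMLMatrix E c b) (hy : IsRecML E' c z y)
    (hmax : ∀ k, anc E k j → ∃ q, PathFrom E' k j q ∧ pathWeight c k q = b k j) :
    (Finset.univ.sup fun k => b k j * z k) ≤ y j := by
  refine Finset.sup_le fun k _ => ?_
  by_cases hkj : k = j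
  · subst hkj
    rw [hb.1]
    exact hy.mul_self_le k
  by_cases hanc : anc E k j
  · obtain ⟨q, hq, hqw⟩ := hmax k hanc
    rw [← hqw]
    exact hy.pathWeight_mul_le hq
  · simp [hb.2.1 k j hkj hanc]

lemma exists_pathFrom_pathWeight_eq_of_forest (hE : Acyclic E) (hc : ∀ u v, E u v → 0 < c u v)
    (hb : IsMLMatrix E c b) (hE' : ∀ u v, E' u v → E u v)
    (hforest : (SimpleGraph.fromRel E').IsAcyclic)
    (hmw : ∀ j, anc E j i → ∃ p, PathFrom E' j i p ∧ pathWeight c j p = b j i)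
    (hji : anc E j i) (hkj : anc E' k j) :
    ∃ q, PathFrom E' k j q ∧ pathWeight c k q = b k j := by
  obtain ⟨q, hq⟩ := hkj
  obtain ⟨r, hr, -⟩ := hmw j hji
  obtain ⟨p, hp, hpw⟩ := hmw k ⟨_, (hq.append hr).mono hE'⟩
  obtain rfl : p = q ++ r.tail := hp.eq_of_isAcyclic (hE.mono hE') hforest (hq.append hr)
  exact ⟨q, hq, (MaxWeighted.of_append hb hc (hq.mono hE') (hr.mono hE') ⟨hp.mono hE', hpw⟩).2⟩

end MaxLinear

theorem stmt6_general {d : ℕ} (E : Fin d → Fin d → Prop) (hE : Acyclic E)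
    (c : Fin d → Fin d → ℝ≥0) (hce : ∀ k i, E k i → 0 < c k i)
    (b : Fin d → Fin d → ℝ≥0) (hb : IsMLMatrix E c b)
    (i : Fin d) (E' : Fin d → Fin d → Prop)
    (hsub : ∀ u v, E' u v → E u v ∧ (anc E u i ∨ u = i) ∧ (anc E v i ∨ v = i))
    (htree : (SimpleGraph.fromRel E').IsAcyclic)
    (hmw : ∀ j, anc E j i → ∃ p, PathFrom E' j i p ∧ pathWeight c j p = b j i)
    (z x y : Fin d → ℝ≥0) (hx : IsRecML E c z x) (hy : IsRecML E' c z y) :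
    ∀ j, (anc E j i ∨ j = i) → (∀ k, anc E' k j ↔ anc E k j) → x j = y j := by
  intro j hj hanc
  have hE' : ∀ u v, E' u v → E u v := fun u v h => (hsub u v h).1
  have hmax : ∀ k, anc E k j → ∃ q, PathFrom E' k j q ∧ pathWeight c k q = b k j := by
    intro k hk
    rcases hj with hji | rfl
    · exact exists_pathFrom_pathWeight_eq_of_forest hE hce hb hE' htree hmw hji ((hanc k).mpr hk)
    · exact hmw k hk
  apply le_antisymm
  · calc x j ≤ Finset.univ.sup (fun k => b k j * z k) :=
          hx.le_sup_mlMatrix hE hb (fun _ _ h => h) j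
      _ ≤ y j := hy.sup_mlMatrix_le hb hmax
  · calc y j ≤ Finset.univ.sup (fun k => b k j * z k) := hy.le_sup_mlMatrix hE hb hE' j
      _ ≤ x j := hx.sup_mlMatrix_le hb fun k hk => hb.2.2.2 k j hk

/-- Let `i ∈ V` and `𝒟ᵢ = (An(i), Eᵢ)` be a subgraph of `𝒟` on `An(i)` whose
underlying undirected graph has no cycles and which, for every `j ∈ an(i)`, contains a path
from `j` to `i` that is max-weighted in `𝒟`. If `x` are the recursive max-linear values on
`𝒟` and `y` those on `𝒟ᵢ` (same weights, same noise `z`), then `x j = y j` for every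
`j ∈ An(i)` whose ancestors in `𝒟ᵢ` coincide with its ancestors in `𝒟`. -/
theorem stmt6 {d : ℕ} (hd : 1 ≤ d) (E : Fin d → Fin d → Prop) (hE : Acyclic E)
    (c : Fin d → Fin d → ℝ≥0) (hcd : ∀ i, 0 < c i i) (hce : ∀ k i, E k i → 0 < c k i)
    (b : Fin d → Fin d → ℝ≥0) (hb : IsMLMatrix E c b)
    (i : Fin d) (E' : Fin d → Fin d → Prop)
    (hsub : ∀ u v, E' u v → E u v ∧ (anc E u i ∨ u = i) ∧ (anc E v i ∨ v = i))
    (htree : (SimpleGraph.fromRel E').IsAcyclic)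
    (hmw : ∀ j, anc E j i → ∃ p, PathFrom E' j i p ∧ pathWeight c j p = b j i)
    (z x y : Fin d → ℝ≥0) (hx : IsRecML E c z x) (hy : IsRecML E' c z y) :
    ∀ j, (anc E j i ∨ j = i) → (∀ k, anc E' k j ↔ anc E k j) → x j = y j :=
  stmt6_general E hE c hce b hb i E' hsub htree hmw z x y hx hy

end MaxLinearDAG
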